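/- arXiv:1310.4359 — 2 statements merged into one kernel-verified Lean document; each statement's English description precedes it below -/
import Mathlib

section
/- Suppose the annealed large deviation principle holds: for a probability measure ν and small ε > 0, lim_{n→∞} (1/n) log (P̃ ⊗ ν)(S_n > nε) = −c(ε) with c(ε) > 0. Then for P̃-almost every ω, limsup_{n→∞} (1/n) log ν({x : S_n(ω, x) > nε}) ≤ −c(ε) (quenched upper large deviation bound). -/
/-! By Fubini the annealed probability `(P ⊗ ν)(Bₙ)` is the `P`-mean of the quenched
probabilities `ν(Bₙ^ω)`. If it is eventually `≤ e^{nr}`, Markov's inequality bounds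
`P{ω : ν(Bₙ^ω) ≥ e^{ns}}` by `e^{n(r-s)}` for any `s > r`; these are summable, so by
Borel–Cantelli almost every `ω` eventually has `ν(Bₙ^ω) < e^{ns}`. Letting `s ↓ r` along a
sequence gives the quenched bound on the limsup. -/

open MeasureTheory Filter
open scoped ENNReal

/-- Random orbit: `randIter T ω n x = T_{ω (n-1)} ∘ ⋯ ∘ T_{ω 0} (x)`. -/
def randIter {X Ω : Type*} (T : Ω → X → X) (ω : ℕ → Ω) : ℕ → X → X
  | 0, x => x
  | n + 1, x => T (ω n) (randIter T ω n x)

lemma measurable_randIter {X Ω : Type*} [MeasurableSpace X] [MeasurableSpace Ω]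
    {T : Ω → X → X} (hT : Measurable fun q : Ω × X => T q.1 q.2) (k : ℕ) :
    Measurable fun p : (ℕ → Ω) × X => randIter T p.1 k p.2 := by
  induction k with
  | zero => exact measurable_snd
  | succ n ih => exact hT.comp (((measurable_pi_apply n).comp measurable_fst).prodMk ih)

lemma ENNReal.log_div_natCast_le_iff {x : ℝ≥0∞} {n : ℕ} (hn : n ≠ 0) (r : ℝ) :
    ENNReal.log x / n ≤ (r : EReal) ↔ x ≤ ENNReal.ofReal (Real.exp (n * r)) := by
  have hn' : (0 : EReal) < n := by exact_mod_cast Nat.pos_of_ne_zero hn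
  rw [EReal.div_le_iff_le_mul hn' (EReal.natCast_ne_top n), ← ENNReal.log_le_log_iff,
    ENNReal.log_ofReal_of_pos (Real.exp_pos _), Real.log_exp, EReal.coe_mul,
    EReal.coe_coe_eq_natCast]

lemma ENNReal.tsum_ne_top_of_eventually_le {u v : ℕ → ℝ≥0∞} (hu : ∀ n, u n ≠ ∞)
    (hv : ∑' n, v n ≠ ∞) (huv : ∀ᶠ n in atTop, u n ≤ v n) : ∑' n, u n ≠ ∞ := by
  obtain ⟨N, hN⟩ := eventually_atTop.mp huv
  have htail : ∑' n, u (n + N) ≤ ∑' n, v n :=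
    (ENNReal.tsum_le_tsum fun n => hN _ (Nat.le_add_left N n)).trans
      (ENNReal.tsum_comp_le_tsum_of_injective (add_left_injective N) v)
  rw [← ENNReal.summable.sum_add_tsum_nat_add']
  exact ENNReal.add_ne_top.mpr
    ⟨ENNReal.sum_ne_top.mpr fun n _ => hu n, ne_top_of_le_ne_top hv htail⟩

/-- Markov's inequality and the Borel–Cantelli lemma. -/
lemma ae_eventually_lt_of_tsum_lintegral_div_ne_top {Ω : Type*} [MeasurableSpace Ω]
    {P : Measure Ω} {f : ℕ → Ω → ℝ≥0∞} {t : ℕ → ℝ≥0∞} (hf : ∀ n, AEMeasurable (f n) P)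
    (ht : ∀ n, t n ≠ 0) (ht' : ∀ n, t n ≠ ∞) (hsum : ∑' n, (∫⁻ ω, f n ω ∂P) / t n ≠ ∞) :
    ∀ᵐ ω ∂P, ∀ᶠ n in atTop, f n ω < t n := by
  have hmarkov : ∀ n, P {ω | t n ≤ f n ω} ≤ (∫⁻ ω, f n ω ∂P) / t n :=
    fun n => meas_ge_le_lintegral_div (hf n) (ht n) (ht' n)
  filter_upwards [ae_eventually_notMem
    (ne_top_of_le_ne_top hsum (ENNReal.tsum_le_tsum hmarkov))] with ω hω
  exact hω.mono fun n hn => not_le.mp hn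

section QuenchedFromAnnealed

variable {Ω X : Type*} [MeasurableSpace Ω] [MeasurableSpace X] {P : Measure Ω} {ν : Measure X}
  [IsFiniteMeasure P] [IsFiniteMeasure ν] {B : ℕ → Set (Ω × X)}

lemma ae_eventually_log_measure_preimage_div_le_of_lt (hB : ∀ n, MeasurableSet (B n))
    {r s : ℝ} (hrs : r < s)
    (hann : ∀ᶠ n : ℕ in atTop, ENNReal.log ((P.prod ν) (B n)) / n ≤ (r : EReal)) :
    ∀ᵐ ω ∂P, ∀ᶠ n : ℕ in atTop, ENNReal.log (ν (Prod.mk ω ⁻¹' B n)) / n ≤ (s : EReal) := by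
  set t : ℕ → ℝ≥0∞ := fun n => ENNReal.ofReal (Real.exp (n * s))
  have ht : ∀ n, t n ≠ 0 := fun n => ENNReal.ofReal_ne_zero_iff.mpr (Real.exp_pos _)
  have hgeom : ∀ᶠ n in atTop,
      (P.prod ν) (B n) / t n ≤ ENNReal.ofReal (Real.exp (r - s)) ^ n := by
    filter_upwards [hann, eventually_ne_atTop 0] with n hn hn0
    calc (P.prod ν) (B n) / t n ≤ ENNReal.ofReal (Real.exp (n * r)) / t n :=
          ENNReal.div_le_div_right ((ENNReal.log_div_natCast_le_iff hn0 r).mp hn) _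
      _ = ENNReal.ofReal (Real.exp (r - s)) ^ n := by
          rw [← ENNReal.ofReal_div_of_pos (Real.exp_pos _), ← Real.exp_sub,
            ← ENNReal.ofReal_pow (Real.exp_pos _).le, ← Real.exp_nat_mul, mul_sub]
  have hsum : ∑' n, (P.prod ν) (B n) / t n ≠ ∞ := by
    refine ENNReal.tsum_ne_top_of_eventually_le
      (fun n => ENNReal.div_ne_top (measure_ne_top _ _) (ht n)) ?_ hgeom
    refine (tsum_geometric_lt_top.mpr ?_).ne
    rw [← ENNReal.ofReal_one, ENNReal.ofReal_lt_ofReal_iff one_pos, Real.exp_lt_one_iff]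
    linarith
  simp only [Measure.prod_apply (hB _)] at hsum
  filter_upwards [ae_eventually_lt_of_tsum_lintegral_div_ne_top
    (fun n => (measurable_measure_prodMk_left (hB n)).aemeasurable) ht
    (fun n => ENNReal.ofReal_ne_top) hsum] with ω hω
  filter_upwards [hω, eventually_ne_atTop 0] with n hn hn0
  exact (ENNReal.log_div_natCast_le_iff hn0 s).mpr hn.le

lemma ae_limsup_log_measure_preimage_div_le (hB : ∀ n, MeasurableSet (B n)) {r : ℝ}
    (hann : limsup (fun n : ℕ => ENNReal.log ((P.prod ν) (B n)) / n) atTop ≤ r) :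
    ∀ᵐ ω ∂P, limsup (fun n : ℕ => ENNReal.log (ν (Prod.mk ω ⁻¹' B n)) / n) atTop ≤ r := by
  have hquench : ∀ s > r,
      ∀ᵐ ω ∂P, ∀ᶠ n : ℕ in atTop, ENNReal.log (ν (Prod.mk ω ⁻¹' B n)) / n ≤ (s : EReal) := by
    intro s hs
    have hmid : limsup (fun n : ℕ => ENNReal.log ((P.prod ν) (B n)) / n) atTop
        < (((r + s) / 2 : ℝ) : EReal) :=
      hann.trans_lt (EReal.coe_lt_coe_iff.mpr (by linarith))
    exact ae_eventually_log_measure_preimage_div_le_of_lt hB (by linarith)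
      ((eventually_lt_of_limsup_lt hmid).mono fun _ => le_of_lt)
  have hseq : ∀ᵐ ω ∂P, ∀ m : ℕ, ∀ᶠ n : ℕ in atTop,
      ENNReal.log (ν (Prod.mk ω ⁻¹' B n)) / n ≤ ((r + 1 / (m + 1) : ℝ) : EReal) :=
    ae_all_iff.mpr fun m => hquench _ (lt_add_of_pos_right r Nat.one_div_pos_of_nat)
  have hlim : Tendsto (fun m : ℕ => ((r + 1 / (m + 1) : ℝ) : EReal)) atTop (nhds r) :=
    EReal.tendsto_coe.mpr <| by
      simpa using tendsto_const_nhds.add (tendsto_one_div_add_atTop_nhds_zero_nat (𝕜 := ℝ))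
  filter_upwards [hseq] with ω hω
  exact ge_of_tendsto' hlim fun m => limsup_le_of_le (by isBoundedDefault) (hω m)

end QuenchedFromAnnealed

theorem quenched_upper_large_deviation_bound_general
    {X Ω : Type*} [MeasurableSpace X] [MeasurableSpace Ω]
    (T : Ω → X → X) (hT : Measurable fun q : Ω × X => T q.1 q.2)
    (Ptilde : Measure (ℕ → Ω)) [IsProbabilityMeasure Ptilde]
    (ν : Measure X) [IsProbabilityMeasure ν]
    (φ : X → ℝ) (hφm : Measurable φ)
    (ε c : ℝ)
    -- annealed large deviation principle at `ε`
    (hLDP : Tendsto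
      (fun n : ℕ => ENNReal.log
          ((Ptilde.prod ν)
            {p : (ℕ → Ω) × X |
              (n : ℝ) * ε < ∑ k ∈ Finset.range n, φ (randIter T p.1 k p.2)}) / (n : EReal))
      atTop (nhds ((-c : ℝ) : EReal))) :
    ∀ᵐ ω ∂Ptilde,
      limsup
        (fun n : ℕ => ENNReal.log
            (ν {x : X | (n : ℝ) * ε < ∑ k ∈ Finset.range n, φ (randIter T ω k x)})
          / (n : EReal))
        atTop ≤ ((-c : ℝ) : EReal) := by
  have hB : ∀ n : ℕ, MeasurableSet
      {p : (ℕ → Ω) × X | (n : ℝ) * ε < ∑ k ∈ Finset.range n, φ (randIter T p.1 k p.2)} :=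
    fun n => measurableSet_lt measurable_const
      (Finset.measurable_sum _ fun k _ => hφm.comp (measurable_randIter hT k))
  exact ae_limsup_log_measure_preimage_div_le hB hLDP.limsup_eq.le

/-- If the annealed large deviation principle holds,
`lim (1/n) log (ℙ̃ ⊗ ν)(S_n > nε) = −c(ε)` with `c(ε) > 0`, then for `ℙ̃`-almost every `ω`,
`limsup (1/n) log ν{x : S_n(ω,x) > nε} ≤ −c(ε)` (quenched upper large deviation bound).
Here `S_n(ω,x) = ∑_{k<n} φ(T_ω^k x)` and logarithms of measures are taken in `EReal`. -/
theorem quenched_upper_large_deviation_bound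
    {X Ω : Type*} [MeasurableSpace X] [MeasurableSpace Ω]
    (T : Ω → X → X) (hT : Measurable fun q : Ω × X => T q.1 q.2)
    (Ptilde : Measure (ℕ → Ω)) [IsProbabilityMeasure Ptilde]
    (ν : Measure X) [IsProbabilityMeasure ν]
    (φ : X → ℝ) (hφm : Measurable φ)
    (ε c : ℝ) (hε : 0 < ε) (hc : 0 < c)
    -- annealed large deviation principle at `ε`
    (hLDP : Tendsto
      (fun n : ℕ => ENNReal.log
          ((Ptilde.prod ν)
            {p : (ℕ → Ω) × X |
              (n : ℝ) * ε < ∑ k ∈ Finset.range n, φ (randIter T p.1 k p.2)}) / (n : EReal))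
      atTop (nhds ((-c : ℝ) : EReal))) :
    ∀ᵐ ω ∂Ptilde,
      limsup
        (fun n : ℕ => ENNReal.log
            (ν {x : X | (n : ℝ) * ε < ∑ k ∈ Finset.range n, φ (randIter T ω k x)})
          / (n : EReal))
        atTop ≤ ((-c : ℝ) : EReal) :=
  quenched_upper_large_deviation_bound_general T hT Ptilde ν φ hφm ε c hLDP
end

section
/- (Necessity of doubled variance for quenched CLT) Let S_n(ω, x) = Σ_{k=0}^{n-1} φ(T_ω^k x) and Ŝ_n(ω, x, y) = Σ_{k=0}^{n-1} (φ(T_ω^k x) − φ(T_ω^k y)). Assume: (1) S_n/√n converges in law to N(0, σ²) under P̃ ⊗ μ with σ² > 0; (2) Ŝ_n/√n converges in law to N(0, σ̂²) under P̃ ⊗ (μ ⊗ μ) with σ̂² > 0; (3) for P̃-a.e. ω, S_n(ω,·)/√n converges in law under μ to N(0, σ²). Then σ̂² = 2σ². -/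
open MeasureTheory Filter ProbabilityTheory BoundedContinuousFunction

open scoped NNReal ENNReal Real

section Aux

lemma aux_integral_gaussianReal_eq (v : ℝ≥0) (hv : v ≠ 0) (g : ℝ → ℝ) :
    ∫ y, g y ∂gaussianReal 0 v = ∫ x, gaussianPDFReal 0 v x * g x := by
  rw [gaussianReal_of_var_ne_zero _ hv]
  have h : gaussianPDF 0 v = fun x => (((gaussianPDFReal 0 v x).toNNReal : ℝ≥0) : ℝ≥0∞) := rfl
  rw [h, integral_withDensity_eq_integral_smul (measurable_gaussianPDFReal 0 v).real_toNNReal]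
  congr 1 with x
  rw [NNReal.smul_def, smul_eq_mul, Real.coe_toNNReal _ (gaussianPDFReal_nonneg 0 v x)]

lemma aux_gauss_cos_sin (v : ℝ≥0) (hv : v ≠ 0) :
    (∫ x : ℝ, Real.exp (-(2*(v:ℝ))⁻¹ * x ^ 2) * Real.cos x)
        = Real.sqrt (2*π*v) * Real.exp (-(v:ℝ)/2) ∧
      (∫ x : ℝ, Real.exp (-(2*(v:ℝ))⁻¹ * x ^ 2) * Real.sin x) = 0 := by
  have hv' : (0:ℝ) < (v:ℝ) := by positivity
  set b : ℂ := (((2*(v:ℝ))⁻¹ : ℝ) : ℂ) with hbdef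
  have hb : (0:ℝ) < b.re := by rw [hbdef]; simp only [Complex.ofReal_re]; positivity
  set F : ℝ → ℂ := fun x => Complex.exp (Complex.I * x) * Complex.exp (-b * x ^ 2) with hF
  have hFint : Integrable F := by
    have h0 := integrable_cexp_quadratic hb Complex.I 0
    refine h0.congr (Filter.EventuallyEq.of_eq ?_)
    funext x
    simp only [hF]
    rw [← Complex.exp_add]
    congr 1
    ring
  have hexp : ∀ x : ℝ, Complex.exp (-b * (x:ℂ) ^ 2)
      = ((Real.exp (-(2*(v:ℝ))⁻¹ * x ^ 2) : ℝ) : ℂ) := by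
    intro x
    rw [show -b * (x:ℂ)^2 = ((-(2*(v:ℝ))⁻¹ * x ^ 2 : ℝ) : ℂ) by rw [hbdef]; push_cast; ring,
      ← Complex.ofReal_exp]
  have hFre : ∀ x : ℝ, (F x).re = Real.exp (-(2*(v:ℝ))⁻¹ * x ^ 2) * Real.cos x := by
    intro x
    simp only [hF]
    rw [hexp x, mul_comm Complex.I, Complex.exp_mul_I, ← Complex.ofReal_cos,
      ← Complex.ofReal_sin,
      show ((Real.cos x : ℂ) + (Real.sin x : ℂ) * Complex.I)
            * ((Real.exp (-(2*(v:ℝ))⁻¹ * x ^ 2) : ℝ) : ℂ)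
          = ((Real.exp (-(2*(v:ℝ))⁻¹ * x ^ 2) * Real.cos x : ℝ) : ℂ)
            + ((Real.exp (-(2*(v:ℝ))⁻¹ * x ^ 2) * Real.sin x : ℝ) : ℂ) * Complex.I by
        push_cast; ring]
    simp only [Complex.add_re, Complex.add_im, Complex.mul_re, Complex.mul_im, Complex.I_re,
      Complex.I_im, Complex.ofReal_re, Complex.ofReal_im]
    ring
  have hFim : ∀ x : ℝ, (F x).im = Real.exp (-(2*(v:ℝ))⁻¹ * x ^ 2) * Real.sin x := by
    intro x
    simp only [hF]
    rw [hexp x, mul_comm Complex.I, Complex.exp_mul_I, ← Complex.ofReal_cos,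
      ← Complex.ofReal_sin,
      show ((Real.cos x : ℂ) + (Real.sin x : ℂ) * Complex.I)
            * ((Real.exp (-(2*(v:ℝ))⁻¹ * x ^ 2) : ℝ) : ℂ)
          = ((Real.exp (-(2*(v:ℝ))⁻¹ * x ^ 2) * Real.cos x : ℝ) : ℂ)
            + ((Real.exp (-(2*(v:ℝ))⁻¹ * x ^ 2) * Real.sin x : ℝ) : ℂ) * Complex.I by
        push_cast; ring]
    simp only [Complex.add_re, Complex.add_im, Complex.mul_re, Complex.mul_im, Complex.I_re,
      Complex.I_im, Complex.ofReal_re, Complex.ofReal_im]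
    ring
  have hval : ∫ x, F x = ((Real.sqrt (2*π*v) * Real.exp (-(v:ℝ)/2) : ℝ) : ℂ) := by
    have h := fourierIntegral_gaussian (b := b) hb 1
    simp only [mul_one] at h
    rw [hF, h]
    have hπ : ((π : ℂ) / b) = ((π * (2*(v:ℝ)) : ℝ) : ℂ) := by
      rw [hbdef]; push_cast; field_simp
    rw [hπ]
    have h1 : ((π * (2*(v:ℝ)) : ℝ) : ℂ) ^ (1/2 : ℂ) = ((Real.sqrt (π * (2*(v:ℝ))) : ℝ) : ℂ) := by
      rw [show ((1/2 : ℂ)) = ((1/2 : ℝ) : ℂ) by norm_num, ← Complex.ofReal_cpow (by positivity),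
        ← Real.sqrt_eq_rpow]
    rw [h1]
    have h2 : -(1:ℂ)^2 / (4 * b) = ((-(v:ℝ)/2 : ℝ) : ℂ) := by
      rw [hbdef]
      have hne : ((2*(v:ℝ))⁻¹ : ℝ) ≠ 0 := by positivity
      push_cast
      field_simp
      ring
    rw [h2, ← Complex.ofReal_exp, ← Complex.ofReal_mul]
    congr 2
    rw [mul_comm π]
    ring_nf
  constructor
  · have h := integral_re (𝕜 := ℂ) hFint
    rw [hval] at h
    simp only [RCLike.re_to_complex, Complex.ofReal_re] at h
    simp only [hFre] at h
    exact h
  · have h := integral_im (𝕜 := ℂ) hFint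
    rw [hval] at h
    simp only [RCLike.im_to_complex, Complex.ofReal_im] at h
    simp only [hFim] at h
    exact h

lemma aux_pdf_mul (v : ℝ≥0) (hv : v ≠ 0) (g : ℝ → ℝ) (x : ℝ) :
    gaussianPDFReal 0 v x * g x
      = (Real.sqrt (2*π*v))⁻¹ * (Real.exp (-(2*(v:ℝ))⁻¹ * x ^ 2) * g x) := by
  rw [gaussianPDFReal]
  rw [show -(x - 0)^2/(2*(v:ℝ)) = -(2*(v:ℝ))⁻¹ * x ^ 2 by ring]
  ring

lemma aux_integral_cos_gaussianReal (v : ℝ≥0) (hv : v ≠ 0) :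
    ∫ y, Real.cos y ∂gaussianReal 0 v = Real.exp (-(v:ℝ)/2) := by
  have hv' : (0:ℝ) < (v:ℝ) := by positivity
  rw [aux_integral_gaussianReal_eq v hv]
  simp_rw [aux_pdf_mul v hv Real.cos]
  rw [integral_const_mul, (aux_gauss_cos_sin v hv).1, ← mul_assoc,
    inv_mul_cancel₀ (by positivity : Real.sqrt (2*π*v) ≠ 0), one_mul]

lemma aux_integral_sin_gaussianReal (v : ℝ≥0) (hv : v ≠ 0) :
    ∫ y, Real.sin y ∂gaussianReal 0 v = 0 := by
  rw [aux_integral_gaussianReal_eq v hv]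
  simp_rw [aux_pdf_mul v hv Real.sin]
  rw [integral_const_mul, (aux_gauss_cos_sin v hv).2, mul_zero]

lemma aux_measurable_randIter {X Ω : Type*} [MeasurableSpace X] [MeasurableSpace Ω]
    {T : Ω → X → X} (hT : Measurable fun q : Ω × X => T q.1 q.2) (k : ℕ) :
    Measurable fun z : (ℕ → Ω) × X => randIter T z.1 k z.2 := by
  induction k with
  | zero => exact measurable_snd
  | succ k ih =>
    exact hT.comp (((measurable_pi_apply k).comp measurable_fst).prodMk ih)

lemma aux_integrable_of_bounded_one {α : Type*} [MeasurableSpace α] (ν : Measure α)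
    [IsFiniteMeasure ν] {f : α → ℝ} (hm : AEStronglyMeasurable f ν) (hb : ∀ a, |f a| ≤ 1) :
    Integrable f ν := by
  refine Integrable.mono' (integrable_const 1) hm (ae_of_all _ fun a => ?_)
  rw [Real.norm_eq_abs]; exact hb a

/-- cos as a bounded continuous function. -/
noncomputable def cosB : ℝ →ᵇ ℝ :=
  BoundedContinuousFunction.ofNormedAddCommGroup Real.cos Real.continuous_cos 1
    (fun x => by rw [Real.norm_eq_abs]; exact Real.abs_cos_le_one x)

/-- sin as a bounded continuous function. -/
noncomputable def sinB : ℝ →ᵇ ℝ :=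
  BoundedContinuousFunction.ofNormedAddCommGroup Real.sin Real.continuous_sin 1
    (fun x => by rw [Real.norm_eq_abs]; exact Real.abs_sin_le_one x)

@[simp] lemma cosB_apply (x : ℝ) : cosB x = Real.cos x := rfl
@[simp] lemma sinB_apply (x : ℝ) : sinB x = Real.sin x := rfl

end Aux

/-- **necessity of doubled variance for the quenched CLT.** With
`S_n(ω,x) = ∑_{k<n} φ(T_ω^k x)` and `Ŝ_n(ω,x,y) = ∑_{k<n} (φ(T_ω^k x) − φ(T_ω^k y))`,
assume: (1) `S_n/√n ⇒ N(0,σ²)` under `ℙ̃ ⊗ μ`, `σ² > 0`; (2) `Ŝ_n/√n ⇒ N(0,σ̂²)` under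
`ℙ̃ ⊗ (μ ⊗ μ)`, `σ̂² > 0`; (3) for `ℙ̃`-a.e. `ω`, `S_n(ω,·)/√n ⇒ N(0,σ²)` under `μ`.
Then `σ̂² = 2σ²`. Convergence in law is expressed by testing against bounded continuous
functions. -/
theorem doubled_variance_of_quenched_clt
    {X Ω : Type*} [MeasurableSpace X] [MeasurableSpace Ω]
    (Pm : Measure Ω) [IsProbabilityMeasure Pm]
    (T : Ω → X → X) (hT : Measurable fun q : Ω × X => T q.1 q.2)
    (Ptilde : Measure (ℕ → Ω)) [IsProbabilityMeasure Ptilde]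
    (μ : Measure X) [IsProbabilityMeasure μ]
    (φ : X → ℝ) (hφm : Measurable φ) (hφb : ∃ C, ∀ x, |φ x| ≤ C)
    (v vhat : NNReal) (hv : 0 < v) (hvhat : 0 < vhat)
    -- (1) annealed CLT for `S_n`
    (h1 : ∀ g : ℝ →ᵇ ℝ, Tendsto
      (fun n : ℕ => ∫ z : (ℕ → Ω) × X,
        g ((∑ k ∈ Finset.range n, φ (randIter T z.1 k z.2)) / Real.sqrt n)
          ∂(Ptilde.prod μ))
      atTop (nhds (∫ y, g y ∂(gaussianReal 0 v))))
    -- (2) annealed CLT for the doubled system observable `Ŝ_n`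
    (h2 : ∀ g : ℝ →ᵇ ℝ, Tendsto
      (fun n : ℕ => ∫ z : (ℕ → Ω) × (X × X),
        g ((∑ k ∈ Finset.range n,
              (φ (randIter T z.1 k z.2.1) - φ (randIter T z.1 k z.2.2))) / Real.sqrt n)
          ∂(Ptilde.prod (μ.prod μ)))
      atTop (nhds (∫ y, g y ∂(gaussianReal 0 vhat))))
    -- (3) quenched CLT with the same variance
    (h3 : ∀ᵐ ω ∂Ptilde, ∀ g : ℝ →ᵇ ℝ, Tendsto
      (fun n : ℕ => ∫ x,
        g ((∑ k ∈ Finset.range n, φ (randIter T ω k x)) / Real.sqrt n) ∂μ)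
      atTop (nhds (∫ y, g y ∂(gaussianReal 0 v)))) :
    (vhat : ℝ) = 2 * v := by
  have hv0 : v ≠ 0 := hv.ne'
  have hvhat0 : vhat ≠ 0 := hvhat.ne'
  -- the normalized Birkhoff sum as a function of (ω, x)
  set A : ℕ → (ℕ → Ω) × X → ℝ :=
    fun n z => (∑ k ∈ Finset.range n, φ (randIter T z.1 k z.2)) / Real.sqrt n with hA
  have hAm : ∀ n, Measurable (A n) := fun n =>
    (Finset.measurable_sum _ fun k _ => hφm.comp (aux_measurable_randIter hT k)).div_const _
  set Cn : ℕ → (ℕ → Ω) → ℝ := fun n ω => ∫ x, Real.cos (A n (ω, x)) ∂μ with hCn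
  set Sn : ℕ → (ℕ → Ω) → ℝ := fun n ω => ∫ x, Real.sin (A n (ω, x)) ∂μ with hSn
  have hCnm : ∀ n, StronglyMeasurable (Cn n) := fun n =>
    (Real.continuous_cos.measurable.comp (hAm n)).stronglyMeasurable.integral_prod_right'
  have hSnm : ∀ n, StronglyMeasurable (Sn n) := fun n =>
    (Real.continuous_sin.measurable.comp (hAm n)).stronglyMeasurable.integral_prod_right'
  have hCnb : ∀ n ω, |Cn n ω| ≤ 1 := by
    intro n ω
    rw [← Real.norm_eq_abs]
    calc ‖Cn n ω‖ ≤ 1 * (μ Set.univ).toReal := by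
          refine norm_integral_le_of_norm_le_const (ae_of_all _ fun x => ?_)
          rw [Real.norm_eq_abs]; exact Real.abs_cos_le_one _
      _ = 1 := by simp
  have hSnb : ∀ n ω, |Sn n ω| ≤ 1 := by
    intro n ω
    rw [← Real.norm_eq_abs]
    calc ‖Sn n ω‖ ≤ 1 * (μ Set.univ).toReal := by
          refine norm_integral_le_of_norm_le_const (ae_of_all _ fun x => ?_)
          rw [Real.norm_eq_abs]; exact Real.abs_sin_le_one _
      _ = 1 := by simp
  -- key Fubini identity
  have key : ∀ n : ℕ,
      (∫ z : (ℕ → Ω) × (X × X),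
        cosB ((∑ k ∈ Finset.range n,
              (φ (randIter T z.1 k z.2.1) - φ (randIter T z.1 k z.2.2))) / Real.sqrt n)
          ∂(Ptilde.prod (μ.prod μ)))
      = ∫ ω, (Cn n ω) ^ 2 + (Sn n ω) ^ 2 ∂Ptilde := by
    intro n
    have hsub : ∀ z : (ℕ → Ω) × (X × X),
        (∑ k ∈ Finset.range n,
            (φ (randIter T z.1 k z.2.1) - φ (randIter T z.1 k z.2.2))) / Real.sqrt n
        = A n (z.1, z.2.1) - A n (z.1, z.2.2) := by
      intro z
      rw [hA]
      simp only
      rw [Finset.sum_sub_distrib, sub_div]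
    have hGm : Measurable fun z : (ℕ → Ω) × (X × X) =>
        Real.cos (A n (z.1, z.2.1) - A n (z.1, z.2.2)) := by
      refine Real.continuous_cos.measurable.comp (Measurable.sub ?_ ?_)
      · exact (hAm n).comp (measurable_fst.prodMk (measurable_fst.comp measurable_snd))
      · exact (hAm n).comp (measurable_fst.prodMk (measurable_snd.comp measurable_snd))
    have hGint : Integrable (fun z : (ℕ → Ω) × (X × X) =>
        Real.cos (A n (z.1, z.2.1) - A n (z.1, z.2.2))) (Ptilde.prod (μ.prod μ)) :=
      aux_integrable_of_bounded_one _ hGm.aestronglyMeasurable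
        (fun z => Real.abs_cos_le_one _)
    calc (∫ z : (ℕ → Ω) × (X × X),
          cosB ((∑ k ∈ Finset.range n,
              (φ (randIter T z.1 k z.2.1) - φ (randIter T z.1 k z.2.2))) / Real.sqrt n)
          ∂(Ptilde.prod (μ.prod μ)))
        = ∫ z : (ℕ → Ω) × (X × X),
            Real.cos (A n (z.1, z.2.1) - A n (z.1, z.2.2)) ∂(Ptilde.prod (μ.prod μ)) := by
          congr 1
          funext z
          rw [cosB_apply, hsub z]
      _ = ∫ ω, ∫ p : X × X, Real.cos (A n (ω, p.1) - A n (ω, p.2)) ∂(μ.prod μ) ∂Ptilde := by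
          rw [MeasureTheory.integral_prod _ hGint]
      _ = ∫ ω, (Cn n ω) ^ 2 + (Sn n ω) ^ 2 ∂Ptilde := by
          congr 1
          funext ω
          have hcm : Measurable fun x : X => Real.cos (A n (ω, x)) :=
            Real.continuous_cos.measurable.comp ((hAm n).comp (measurable_prodMk_left))
          have hsm : Measurable fun x : X => Real.sin (A n (ω, x)) :=
            Real.continuous_sin.measurable.comp ((hAm n).comp (measurable_prodMk_left))
          have hci : Integrable (fun x : X => Real.cos (A n (ω, x))) μ :=
            aux_integrable_of_bounded_one _ hcm.aestronglyMeasurable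
              (fun x => Real.abs_cos_le_one _)
          have hsi : Integrable (fun x : X => Real.sin (A n (ω, x))) μ :=
            aux_integrable_of_bounded_one _ hsm.aestronglyMeasurable
              (fun x => Real.abs_sin_le_one _)
          calc (∫ p : X × X, Real.cos (A n (ω, p.1) - A n (ω, p.2)) ∂(μ.prod μ))
              = ∫ p : X × X, (Real.cos (A n (ω, p.1)) * Real.cos (A n (ω, p.2))
                  + Real.sin (A n (ω, p.1)) * Real.sin (A n (ω, p.2))) ∂(μ.prod μ) := by
                congr 1
                funext p
                rw [Real.cos_sub]
            _ = (∫ p : X × X, Real.cos (A n (ω, p.1)) * Real.cos (A n (ω, p.2)) ∂(μ.prod μ))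
                + ∫ p : X × X, Real.sin (A n (ω, p.1)) * Real.sin (A n (ω, p.2)) ∂(μ.prod μ) := by
                exact integral_add (hci.mul_prod hci) (hsi.mul_prod hsi)
            _ = (Cn n ω) ^ 2 + (Sn n ω) ^ 2 := by
                rw [MeasureTheory.integral_prod_mul (f := fun x : X => Real.cos (A n (ω, x)))
                    (g := fun x : X => Real.cos (A n (ω, x))),
                  MeasureTheory.integral_prod_mul (f := fun x : X => Real.sin (A n (ω, x)))
                    (g := fun x : X => Real.sin (A n (ω, x))), hCn, hSn]
                simp only
                ring
  -- limit via h2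
  have L1 : Tendsto (fun n => ∫ ω, (Cn n ω) ^ 2 + (Sn n ω) ^ 2 ∂Ptilde) atTop
      (nhds (Real.exp (-(vhat:ℝ)/2))) := by
    have h := h2 cosB
    have hg : (∫ y, cosB y ∂gaussianReal 0 vhat) = Real.exp (-(vhat:ℝ)/2) :=
      aux_integral_cos_gaussianReal vhat hvhat0
    rw [hg] at h
    simp_rw [key] at h
    exact h
  -- limit via h3 and dominated convergence
  have L2 : Tendsto (fun n => ∫ ω, (Cn n ω) ^ 2 + (Sn n ω) ^ 2 ∂Ptilde) atTop
      (nhds (Real.exp (-(v:ℝ)))) := by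
    have hlim : ∀ᵐ ω ∂Ptilde, Tendsto (fun n => (Cn n ω) ^ 2 + (Sn n ω) ^ 2) atTop
        (nhds (Real.exp (-(v:ℝ)))) := by
      filter_upwards [h3] with ω hω
      have hc := hω cosB
      have hs := hω sinB
      simp only [cosB_apply] at hc
      simp only [sinB_apply] at hs
      rw [aux_integral_cos_gaussianReal v hv0] at hc
      rw [aux_integral_sin_gaussianReal v hv0] at hs
      have hc' : Tendsto (fun n => Cn n ω) atTop (nhds (Real.exp (-(v:ℝ)/2))) := by
        simp only [hCn, hA]
        exact hc
      have hs' : Tendsto (fun n => Sn n ω) atTop (nhds 0) := by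
        simp only [hSn, hA]
        exact hs
      have := ((hc'.mul hc').add (hs'.mul hs'))
      have heq : Real.exp (-(v:ℝ)/2) * Real.exp (-(v:ℝ)/2) + (0:ℝ) * 0 = Real.exp (-(v:ℝ)) := by
        rw [← Real.exp_add]
        ring_nf
      rw [heq] at this
      refine this.congr fun n => by ring
    have hD := MeasureTheory.tendsto_integral_of_dominated_convergence
      (F := fun n ω => (Cn n ω) ^ 2 + (Sn n ω) ^ 2) (f := fun _ => Real.exp (-(v:ℝ)))
      (bound := fun _ => (2:ℝ))
      (fun n => (((hCnm n).pow 2).add ((hSnm n).pow 2)).aestronglyMeasurable)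
      (integrable_const 2)
      (fun n => ae_of_all _ fun ω => by
        show ‖(Cn n ω) ^ 2 + (Sn n ω) ^ 2‖ ≤ 2
        have hb1 : (Cn n ω) ^ 2 + (Sn n ω) ^ 2 ≤ 2 := by
          nlinarith [hCnb n ω, hSnb n ω, abs_nonneg (Cn n ω), abs_nonneg (Sn n ω),
            sq_abs (Cn n ω), sq_abs (Sn n ω)]
        have hnn : (0:ℝ) ≤ (Cn n ω) ^ 2 + (Sn n ω) ^ 2 := by positivity
        rw [Real.norm_eq_abs, abs_of_nonneg hnn]
        exact hb1)
      hlim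
    simpa using hD
  have hEq := tendsto_nhds_unique L1 L2
  have := Real.exp_eq_exp.mp hEq
  linarith
end
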